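/- arXiv:2304.11449 — 3 statements merged into one kernel-verified Lean document; each statement's English description precedes it below -/
import Mathlib

section
/- Let f and g be two differentiable convex functions on the real line. Then for any real a and any b > 0, |f'(a) - g'(a)| ≤ g'(a + b) - g'(a - b) + d/b, where d = |f(a+b) - g(a+b)| + |f(a-b) - g(a-b)| + |f(a) - g(a)|. -/
/-!
Everything follows from the tangent-line inequality `f x + f'(x) (y - x) ≤ f y` of a convex
function. For the upper bound on `f'(a) - g'(a)`: `b f'(a) ≤ f(a+b) - f(a)` and
`g(a) - g(a-b) ≤ b g'(a)`; trading the values of `f` for those of `g` at the cost of `d`, what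
remains is the second difference `g(a+b) - 2 g(a) + g(a-b)`, which the tangent lines of `g` at
`a ± b` bound by `b (g'(a+b) - g'(a-b))`. The lower bound is symmetric, with `f(a-b)` in place
of `f(a+b)`.
-/

theorem ConvexOn.add_mul_sub_le_of_hasDerivAt {S : Set ℝ} {f : ℝ → ℝ} {f' x y : ℝ}
    (hfc : ConvexOn ℝ S f) (hx : x ∈ S) (hy : y ∈ S) (hf : HasDerivAt f f' x) :
    f x + f' * (y - x) ≤ f y := by
  rcases lt_trichotomy x y with hxy | rfl | hyx
  · have h := hfc.le_slope_of_hasDerivAt hx hy hxy hf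
    rw [slope_def_field, le_div_iff₀ (sub_pos.mpr hxy)] at h
    linarith
  · simp
  · have h := hfc.slope_le_of_hasDerivAt hy hx hyx hf
    rw [slope_def_field, div_le_iff₀ (sub_pos.mpr hyx)] at h
    linarith

/-- Lemma 3.2 in Panchenko: for differentiable convex `f, g : ℝ → ℝ`,
any `a` and `b > 0`,
`|f'(a) - g'(a)| ≤ g'(a+b) - g'(a-b) + d/b` with
`d = |f(a+b) - g(a+b)| + |f(a-b) - g(a-b)| + |f(a) - g(a)|`. -/
theorem stmt0 (f g : ℝ → ℝ) (hf : Differentiable ℝ f) (hg : Differentiable ℝ g)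
    (hfc : ConvexOn ℝ Set.univ f) (hgc : ConvexOn ℝ Set.univ g)
    (a b : ℝ) (hb : 0 < b) :
    |deriv f a - deriv g a| ≤
      deriv g (a + b) - deriv g (a - b) +
        (|f (a + b) - g (a + b)| + |f (a - b) - g (a - b)| + |f a - g a|) / b := by
  have tangent {h : ℝ → ℝ} (hh : Differentiable ℝ h) (hhc : ConvexOn ℝ Set.univ h) (x y : ℝ) :
      h x + deriv h x * (y - x) ≤ h y :=
    hhc.add_mul_sub_le_of_hasDerivAt trivial trivial (hh x).hasDerivAt
  have f_right := tangent hf hfc a (a + b)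
  have f_left := tangent hf hfc a (a - b)
  have g_right := tangent hg hgc a (a + b)
  have g_left := tangent hg hgc a (a - b)
  have g_right' := tangent hg hgc (a + b) a
  have g_left' := tangent hg hgc (a - b) a
  have scaled : |b * (deriv f a - deriv g a)| ≤ b * (deriv g (a + b) - deriv g (a - b)) +
      (|f (a + b) - g (a + b)| + |f (a - b) - g (a - b)| + |f a - g a|) := by
    rw [abs_le]
    constructor <;> linarith [abs_le.mp (le_refl |f (a + b) - g (a + b)|),
      abs_le.mp (le_refl |f (a - b) - g (a - b)|), abs_le.mp (le_refl |f a - g a|)]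
  rw [abs_mul, abs_of_pos hb] at scaled
  rwa [← mul_le_mul_iff_of_pos_left hb, mul_add, mul_div_cancel₀ _ hb.ne']
end

section
/- Let π be a probability distribution on ℝ supported on finitely many points x₁ < x₂ < ⋯ < x_s with s ≥ 2, all contained in [-M, M], and let δ = min_i (x_{i+1} - x_i)/2. Let Θ ~ π and G ~ N(0,1) independent, and Y = Θ + β^{-1}G. Then E[(Θ - Θ̂(Y))²] ≤ (16 M²/(δ β √(2π))) e^{-δ² β²/8}, where Θ̂(y) is the point of supp(π) nearest to y. Consequently E[Var(Θ | β²Θ + βG)] ≤ (16 M²/(δ β √(2π))) e^{-δ² β²/8}. -/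
/-!
Off an event of small Gaussian probability the noise is too weak to move `Θ` out of the
`δ`-ball around it, and these balls are disjoint, so any nearest-point decoder recovers `Θ`
exactly; on the remaining event the squared error is at most `(2M)²`. The event is
`|G| ≥ δβ`, whose probability is controlled by the Gaussian tail bound
`P(G ≥ t) ≤ e^{-t²/2} / (t √(2π))`. Since `Z = β²Y`, a measurable decoder applied to
`Z / β²` is `σ(Z)`-measurable, and the conditional expectation is the best `L²` estimator
among those.
-/

open MeasureTheory ProbabilityTheory Set

section GaussianTail

open Real

lemma gaussianReal_real_Ici_le {t : ℝ} (ht : 0 < t) :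
    (gaussianReal 0 1).real (Ici t) ≤ exp (-t ^ 2 / 2) / (t * √(2 * π)) := by
  have hpdf : ∀ y, gaussianPDFReal 0 1 y = (√(2 * π))⁻¹ * exp (-y ^ 2 / 2) := by
    simp [gaussianPDFReal]
  -- `-y²/2 ≤ t²/2 - t y` linearises the exponent on `[t, ∞)`
  have hdom : ∀ y, (√(2 * π))⁻¹ * exp (-y ^ 2 / 2)
      ≤ (√(2 * π))⁻¹ * exp (t ^ 2 / 2) * exp (-t * y) := fun y => by
    rw [mul_assoc, ← exp_add]
    gcongr
    nlinarith [sq_nonneg (y - t)]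
  rw [measureReal_def, gaussianReal_apply_eq_integral 0 one_ne_zero,
    ENNReal.toReal_ofReal
      (setIntegral_nonneg measurableSet_Ici fun y _ => gaussianPDFReal_nonneg 0 1 y),
    integral_Ici_eq_integral_Ioi]
  calc ∫ y in Ioi t, gaussianPDFReal 0 1 y
      ≤ ∫ y in Ioi t, (√(2 * π))⁻¹ * exp (t ^ 2 / 2) * exp (-t * y) := by
        refine setIntegral_mono (integrable_gaussianPDFReal 0 1).integrableOn
          ((integrableOn_exp_mul_Ioi (by linarith) t).const_mul _) fun y => ?_
        rw [hpdf]; exact hdom y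
    _ = exp (-t ^ 2 / 2) / (t * √(2 * π)) := by
        rw [integral_const_mul, integral_exp_mul_Ioi (by linarith), neg_mul, exp_neg (t * t)]
        field_simp
        rw [← exp_add]; ring_nf

lemma gaussianReal_real_Iic_neg (t : ℝ) :
    (gaussianReal 0 1).real (Iic (-t)) = (gaussianReal 0 1).real (Ici t) := by
  conv_rhs =>
    rw [← neg_zero, ← gaussianReal_map_neg, map_measureReal_apply (by fun_prop) measurableSet_Ici]
  congr 1
  ext y; simp

lemma gaussianReal_real_le_abs_le {t : ℝ} (ht : 0 < t) :
    (gaussianReal 0 1).real {y | t ≤ |y|} ≤ 2 * exp (-t ^ 2 / 2) / (t * √(2 * π)) := by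
  have hsub : {y : ℝ | t ≤ |y|} ⊆ Iic (-t) ∪ Ici t := fun y hy => by
    rcases le_abs'.mp (show t ≤ |y| from hy) with h | h
    exacts [Or.inl h, Or.inr h]
  calc (gaussianReal 0 1).real {y | t ≤ |y|}
      ≤ (gaussianReal 0 1).real (Iic (-t)) + (gaussianReal 0 1).real (Ici t) :=
        (measureReal_mono hsub).trans (measureReal_union_le _ _)
    _ ≤ 2 * exp (-t ^ 2 / 2) / (t * √(2 * π)) := by
        rw [gaussianReal_real_Iic_neg, mul_div_assoc]
        linarith [gaussianReal_real_Ici_le ht]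

end GaussianTail

section Separated

variable {ι α : Type*} [PseudoMetricSpace α] {x : ι → α} {δ : ℝ}

lemma le_dist_of_separated (hgap : ∀ i j, i ≠ j → 2 * δ ≤ dist (x i) (x j)) {i k : ι}
    (hik : i ≠ k) {y : α} (hy : dist y (x k) < δ) : δ ≤ dist y (x i) := by
  have := dist_triangle_left (x i) (x k) y
  linarith [hgap i k hik]

lemma eq_of_separated_of_isNearest (hgap : ∀ i j, i ≠ j → 2 * δ ≤ dist (x i) (x j)) {y : α}
    {j k : ι} (hk : dist y (x k) < δ) (hj : ∀ i, dist (x j) y ≤ dist (x i) y) : j = k := by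
  by_contra hjk
  have := le_dist_of_separated hgap hjk hk
  linarith [hj k, dist_comm y (x j), dist_comm y (x k)]

end Separated

section Gaps

variable {ι : Type*} [Finite ι]

lemma finite_setOf_abs_sub (x : ι → ℝ) :
    {d : ℝ | ∃ i j : ι, i ≠ j ∧ d = |x i - x j|}.Finite :=
  (finite_range fun p : ι × ι => |x p.1 - x p.2|).subset fun _ ⟨i, j, _, hd⟩ => ⟨(i, j), hd.symm⟩

lemma sInf_abs_sub_le_dist (x : ι → ℝ) {i j : ι} (hij : i ≠ j) :
    sInf {d : ℝ | ∃ i j : ι, i ≠ j ∧ d = |x i - x j|} ≤ dist (x i) (x j) :=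
  csInf_le (finite_setOf_abs_sub x).bddBelow ⟨i, j, hij, rfl⟩

lemma sInf_abs_sub_pos [Nontrivial ι] {x : ι → ℝ} (hx : Function.Injective x) :
    0 < sInf {d : ℝ | ∃ i j : ι, i ≠ j ∧ d = |x i - x j|} := by
  obtain ⟨i, j, hij⟩ := exists_pair_ne ι
  have hne : {d : ℝ | ∃ i j : ι, i ≠ j ∧ d = |x i - x j|}.Nonempty := ⟨_, i, j, hij, rfl⟩
  obtain ⟨k, l, hkl, hd⟩ := hne.csInf_mem (finite_setOf_abs_sub x)
  rw [hd]
  exact abs_pos.2 (sub_ne_zero.2 (hx.ne hkl))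

end Gaps

noncomputable def ballDecoder {ι : Type*} [Fintype ι] (x : ι → ℝ) (δ : ℝ) (y : ℝ) : ℝ :=
  ∑ i, (Metric.ball (x i) δ).indicator (fun _ => x i) y

section BallDecoder

variable {ι : Type*} [Fintype ι] {x : ι → ℝ} {δ : ℝ}

lemma measurable_ballDecoder (x : ι → ℝ) (δ : ℝ) : Measurable (ballDecoder x δ) :=
  Finset.measurable_sum _ fun _ _ => measurable_const.indicator Metric.isOpen_ball.measurableSet

lemma ballDecoder_eq (hgap : ∀ i j, i ≠ j → 2 * δ ≤ dist (x i) (x j)) {y : ℝ} {k : ι}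
    (hk : dist y (x k) < δ) : ballDecoder x δ y = x k := by
  rw [ballDecoder, Finset.sum_eq_single k, indicator_of_mem (Metric.mem_ball.2 hk)]
  · intro i _ hik
    exact indicator_of_notMem (s := Metric.ball (x i) δ)
      (fun hy => (le_dist_of_separated hgap hik hk).not_gt hy) _
  · simp

lemma abs_ballDecoder_le (hgap : ∀ i j, i ≠ j → 2 * δ ≤ dist (x i) (x j)) {M : ℝ} (hM0 : 0 ≤ M)
    (hM : ∀ i, |x i| ≤ M) (y : ℝ) : |ballDecoder x δ y| ≤ M := by
  by_cases h : ∃ k, dist y (x k) < δ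
  · obtain ⟨k, hk⟩ := h
    rw [ballDecoder_eq hgap hk]; exact hM k
  · push Not at h
    rw [ballDecoder, Finset.sum_eq_zero fun i _ =>
      indicator_of_notMem (s := Metric.ball (x i) δ) (fun hy => (h i).not_gt hy) _]
    simpa using hM0

end BallDecoder

lemma integral_sq_sub_decode_le {π ν : Measure ℝ} [IsProbabilityMeasure π] [IsFiniteMeasure ν]
    {F : ℝ → ℝ} {M c r : ℝ} (hF : ∀ y, |F y| ≤ M)
    (hπ : ∀ᵐ θ ∂π, |θ| ≤ M ∧ ∀ g, |g| < r → F (θ + c * g) = θ) :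
    ∫ ω : ℝ × ℝ, (ω.1 - F (ω.1 + c * ω.2)) ^ 2 ∂(π.prod ν)
      ≤ 4 * M ^ 2 * ν.real {g | r ≤ |g|} := by
  set S : Set (ℝ × ℝ) := univ ×ˢ {g | r ≤ |g|}
  have hS : MeasurableSet S :=
    MeasurableSet.univ.prod (measurableSet_le measurable_const measurable_abs)
  have hle : ∀ᵐ ω ∂(π.prod ν),
      (ω.1 - F (ω.1 + c * ω.2)) ^ 2 ≤ S.indicator (fun _ => 4 * M ^ 2) ω := by
    filter_upwards [Measure.quasiMeasurePreserving_fst.ae hπ] with ω ⟨hθ, hdec⟩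
    by_cases hω : r ≤ |ω.2|
    · rw [indicator_of_mem (by simpa [S] using hω)]
      have h2M : |ω.1 - F (ω.1 + c * ω.2)| ≤ 2 * M :=
        (abs_sub _ _).trans (by linarith [hF (ω.1 + c * ω.2)])
      nlinarith [sq_abs (ω.1 - F (ω.1 + c * ω.2)), abs_nonneg (ω.1 - F (ω.1 + c * ω.2))]
    · rw [indicator_of_notMem (by simpa [S] using hω), hdec ω.2 (not_le.1 hω), sub_self]
      norm_num
  calc ∫ ω : ℝ × ℝ, (ω.1 - F (ω.1 + c * ω.2)) ^ 2 ∂(π.prod ν)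
      ≤ ∫ ω, S.indicator (fun _ => 4 * M ^ 2) ω ∂(π.prod ν) :=
        integral_mono_of_nonneg (ae_of_all _ fun _ => sq_nonneg _)
          ((integrable_const _).indicator hS) hle
    _ = 4 * M ^ 2 * ν.real {g | r ≤ |g|} := by
        rw [integral_indicator_const _ hS, measureReal_prod_prod, probReal_univ, one_mul,
          smul_eq_mul, mul_comm]

lemma integral_sq_sub_condExp_le {Ω : Type*} {m m₀ : MeasurableSpace Ω} {μ : Measure Ω}
    [IsFiniteMeasure μ] (hm : m ≤ m₀) {f g : Ω → ℝ} (hf : MemLp f 2 μ) (hg : MemLp g 2 μ)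
    (hgm : StronglyMeasurable[m] g) :
    ∫ ω, (f ω - μ[f | m] ω) ^ 2 ∂μ ≤ ∫ ω, (f ω - g ω) ^ 2 ∂μ := by
  set E := μ[f | m]
  set h := E - g
  have hE : MemLp E 2 μ := hf.condExp one_le_two
  have hh : MemLp h 2 μ := hE.sub hg
  have hfE : MemLp (f - E) 2 μ := hf.sub hE
  have hhf : Integrable (fun ω => h ω * f ω) μ := hh.integrable_mul hf
  have hhE : Integrable (fun ω => h ω * E ω) μ := hh.integrable_mul hE
  have hfE2 : Integrable (fun ω => (f ω - E ω) ^ 2) μ := hfE.integrable_sq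
  have hh2 : Integrable (fun ω => h ω ^ 2) μ := hh.integrable_sq
  have hfEh : Integrable (fun ω => 2 * ((f ω - E ω) * h ω)) μ :=
    (hfE.integrable_mul hh).const_mul 2
  have hrest : Integrable (fun ω => 2 * ((f ω - E ω) * h ω) + h ω ^ 2) μ := hfEh.add hh2
  have hpull : ∫ ω, h ω * f ω ∂μ = ∫ ω, h ω * E ω ∂μ := by
    rw [← integral_condExp hm]
    exact integral_congr_ae (condExp_mul_of_stronglyMeasurable_left
      (stronglyMeasurable_condExp.sub hgm) hhf (hf.integrable one_le_two))
  have hcross : ∫ ω, (f ω - E ω) * h ω ∂μ = 0 := by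
    calc ∫ ω, (f ω - E ω) * h ω ∂μ = ∫ ω, h ω * f ω ∂μ - ∫ ω, h ω * E ω ∂μ := by
          rw [← integral_sub hhf hhE]
          congr with ω; ring
      _ = 0 := by rw [hpull, sub_self]
  calc ∫ ω, (f ω - E ω) ^ 2 ∂μ
      ≤ ∫ ω, (f ω - E ω) ^ 2 ∂μ + (2 * ∫ ω, (f ω - E ω) * h ω ∂μ + ∫ ω, h ω ^ 2 ∂μ) := by
        rw [hcross]
        linarith [integral_nonneg (μ := μ) (f := fun ω => h ω ^ 2) fun ω => sq_nonneg _]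
    _ = ∫ ω, (f ω - g ω) ^ 2 ∂μ := by
        rw [← integral_const_mul, ← integral_add hfEh hh2, ← integral_add hfE2 hrest]
        congr with ω; simp only [h, Pi.sub_apply]; ring

lemma integral_sq_sub_decode_gaussian_le {ι : Type*} {x : ι → ℝ} {π : Measure ℝ}
    [IsProbabilityMeasure π] (hπ : ∀ᵐ θ ∂π, θ ∈ range x) {M δ β : ℝ} (hM : ∀ i, |x i| ≤ M)
    (hδ : 0 < δ) (hβ : 0 < β) {F : ℝ → ℝ} (hF : ∀ y, |F y| ≤ M)
    (hexact : ∀ i y, dist y (x i) < δ → F y = x i) :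
    ∫ ω : ℝ × ℝ, (ω.1 - F (ω.1 + β⁻¹ * ω.2)) ^ 2 ∂(π.prod (gaussianReal 0 1))
      ≤ 16 * M ^ 2 / (δ * β * Real.sqrt (2 * Real.pi)) * Real.exp (-δ ^ 2 * β ^ 2 / 8) := by
  have hδβ : 0 < δ * β := mul_pos hδ hβ
  have hπF : ∀ᵐ θ ∂π, |θ| ≤ M ∧ ∀ g, |g| < δ * β → F (θ + β⁻¹ * g) = θ := by
    filter_upwards [hπ] with θ ⟨i, hi⟩
    refine hi ▸ ⟨hM i, fun g hg => hexact i _ ?_⟩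
    rw [Real.dist_eq, add_sub_cancel_left, abs_mul, abs_inv, abs_of_pos hβ, inv_mul_lt_iff₀ hβ]
    linarith
  have hexp : Real.exp (-(δ * β) ^ 2 / 2) ≤ Real.exp (-δ ^ 2 * β ^ 2 / 8) :=
    Real.exp_le_exp.2 (by nlinarith [sq_nonneg (δ * β)])
  calc ∫ ω : ℝ × ℝ, (ω.1 - F (ω.1 + β⁻¹ * ω.2)) ^ 2 ∂(π.prod (gaussianReal 0 1))
      ≤ 4 * M ^ 2 * (gaussianReal 0 1).real {g | δ * β ≤ |g|} := integral_sq_sub_decode_le hF hπF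
    _ ≤ 4 * M ^ 2 * (2 * Real.exp (-(δ * β) ^ 2 / 2) / (δ * β * Real.sqrt (2 * Real.pi))) := by
        gcongr; exact gaussianReal_real_le_abs_le hδβ
    _ ≤ 16 * M ^ 2 / (δ * β * Real.sqrt (2 * Real.pi)) * Real.exp (-δ ^ 2 * β ^ 2 / 8) := by
        rw [div_mul_eq_mul_div, mul_div_assoc']
        refine div_le_div_of_nonneg_right ?_ (by positivity)
        nlinarith [mul_le_mul_of_nonneg_left hexp (sq_nonneg M), sq_nonneg M,
          Real.exp_pos (-δ ^ 2 * β ^ 2 / 8)]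

lemma stronglyMeasurable_comp_add_inv_mul_comap {F : ℝ → ℝ} (hF : Measurable F) {β : ℝ}
    (hβ : β ≠ 0) :
    StronglyMeasurable[MeasurableSpace.comap (fun ω : ℝ × ℝ => β ^ 2 * ω.1 + β * ω.2) inferInstance]
      fun ω => F (ω.1 + β⁻¹ * ω.2) := by
  have hcomp : (fun ω : ℝ × ℝ => F (ω.1 + β⁻¹ * ω.2))
      = (fun z => F (z / β ^ 2)) ∘ fun ω => β ^ 2 * ω.1 + β * ω.2 := by
    funext ω; simp only [Function.comp_apply]; congr 1; field_simp
  rw [hcomp]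
  exact ((hF.comp (measurable_id.div_const _)).comp (comap_measurable _)).stronglyMeasurable

/-- let `π` be supported on finitely many points `x₁ < ⋯ < x_s` (`s ≥ 2`)
in `[-M, M]`, `δ` half the minimal gap, `Θ ~ π` and `G ~ N(0,1)` independent,
`Y = Θ + β⁻¹ G`, and `Θ̂(y)` a nearest point of the support to `y`.  Then
`E[(Θ - Θ̂(Y))²] ≤ (16M²/(δβ√(2π))) e^{-δ²β²/8}`, and consequently
`E[Var(Θ | β²Θ + βG)] = E[(Θ - E[Θ | β²Θ + βG])²]` obeys the same bound. -/
theorem stmt10 (s : ℕ) (hs : 2 ≤ s) (x : Fin s → ℝ) (hmono : StrictMono x)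
    (M : ℝ) (hM : ∀ i, |x i| ≤ M)
    (π : Measure ℝ) [IsProbabilityMeasure π] (hsupp : π (Set.range x) = 1)
    (δ : ℝ) (hδ : δ = sInf {d : ℝ | ∃ i j : Fin s, i ≠ j ∧ d = |x i - x j|} / 2)
    (That : ℝ → ℝ)
    (hThat : ∀ y : ℝ, That y ∈ Set.range x ∧ ∀ i, |That y - y| ≤ |x i - y|)
    (β : ℝ) (hβ : 0 < β) :
    (∫ ω : ℝ × ℝ, (ω.1 - That (ω.1 + β⁻¹ * ω.2)) ^ 2 ∂(π.prod (gaussianReal 0 1)))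
        ≤ 16 * M ^ 2 / (δ * β * Real.sqrt (2 * Real.pi)) * Real.exp (-δ ^ 2 * β ^ 2 / 8) ∧
    (∫ ω : ℝ × ℝ,
        (ω.1 - (MeasureTheory.condExp
            (MeasurableSpace.comap (fun ω : ℝ × ℝ => β ^ 2 * ω.1 + β * ω.2) inferInstance)
            (π.prod (gaussianReal 0 1)) (fun ω : ℝ × ℝ => ω.1)) ω) ^ 2
        ∂(π.prod (gaussianReal 0 1)))
        ≤ 16 * M ^ 2 / (δ * β * Real.sqrt (2 * Real.pi)) * Real.exp (-δ ^ 2 * β ^ 2 / 8) := by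
  have : Nontrivial (Fin s) := Fin.nontrivial_iff_two_le.2 hs
  have hδpos : 0 < δ := hδ ▸ half_pos (sInf_abs_sub_pos hmono.injective)
  have hgap : ∀ i j, i ≠ j → 2 * δ ≤ dist (x i) (x j) := fun i j hij => by
    rw [hδ]; linarith [sInf_abs_sub_le_dist x hij]
  have hπ : ∀ᵐ θ ∂π, θ ∈ range x :=
    (ae_mem_iff_measure_eq (finite_range x).measurableSet.nullMeasurableSet).2
      (by rw [hsupp, measure_univ])
  have hM0 : 0 ≤ M := (abs_nonneg _).trans (hM ⟨0, by omega⟩)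
  have hThat_le : ∀ y, |That y| ≤ M := fun y => by
    obtain ⟨i, hi⟩ := (hThat y).1
    exact hi ▸ hM i
  refine ⟨integral_sq_sub_decode_gaussian_le hπ hM hδpos hβ hThat_le fun i y hy => ?_, ?_⟩
  · obtain ⟨j, hj⟩ := (hThat y).1
    have hji : j = i := eq_of_separated_of_isNearest hgap hy fun k => by
      simpa only [Real.dist_eq, hj] using (hThat y).2 k
    rw [← hj, hji]
  have hm := (by fun_prop : Measurable fun ω : ℝ × ℝ => β ^ 2 * ω.1 + β * ω.2).comap_le
  set g : ℝ × ℝ → ℝ := fun ω => ballDecoder x δ (ω.1 + β⁻¹ * ω.2)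
  have hgm := stronglyMeasurable_comp_add_inv_mul_comap (measurable_ballDecoder x δ) hβ.ne'
  have hθ : MemLp (fun ω : ℝ × ℝ => ω.1) 2 (π.prod (gaussianReal 0 1)) :=
    MemLp.of_bound measurable_fst.aestronglyMeasurable M <| by
      filter_upwards [Measure.quasiMeasurePreserving_fst.ae hπ] with ω ⟨i, hi⟩
      exact hi ▸ hM i
  have hg : MemLp g 2 (π.prod (gaussianReal 0 1)) :=
    MemLp.of_bound (hgm.mono hm).aestronglyMeasurable M
      (ae_of_all _ fun _ => abs_ballDecoder_le hgap hM0 hM _)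
  exact (integral_sq_sub_condExp_le hm hθ hg hgm).trans
    (integral_sq_sub_decode_gaussian_le hπ hM hδpos hβ (abs_ballDecoder_le hgap hM0 hM)
      fun _ _ hy => ballDecoder_eq hgap hy)
end

section
/- Let π_Θ be a probability measure on ℝ with density proportional to e^{-U(θ)} where ‖U''‖_∞ ≤ C < ∞, let t > 0, and let π_{x,t} be the conditional law of Θ given tΘ + √t G = x, where (Θ,G) ~ π_Θ ⊗ N(0,1). Then Var[Θ | tΘ + √t G = x] ≥ 1/(10⁵(C + t)) for all x ∈ ℝ. -/
/-!
Write the posterior density as `exp (-V) / Z` with `V θ = U θ + t θ² / 2 - x θ`, so that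
`V'' ≤ C + t =: K`. The quadratic upper Taylor bound for `V` shows that next to any point `θ₀`
there is an interval of length `1 / √K` on which `V ≤ V θ₀ + 1/2`; hence the normalized density
is at most `2 √K`. So the ball of radius `1 / (8 √K)` around the mean carries at most half of the
mass, and Chebyshev's inequality gives `Var ≥ (1/2) (1 / (8 √K))² = 1 / (128 K)`.
-/

open MeasureTheory ProbabilityTheory Set

section

open Real

theorem le_add_deriv_mul_add_sq_of_deriv2_le {f f' f'' : ℝ → ℝ}
    (hf : ∀ y, HasDerivAt f (f' y) y) (hf' : ∀ y, HasDerivAt f' (f'' y) y) {K : ℝ}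
    (hK : ∀ y, f'' y ≤ K) (a θ : ℝ) :
    f θ ≤ f a + f' a * (θ - a) + K / 2 * (θ - a) ^ 2 := by
  set g : ℝ → ℝ := fun y => f a + f' a * (y - a) + K / 2 * (y - a) ^ 2 - f y
  set g' : ℝ → ℝ := fun y => f' a + K * (y - a) - f' y
  have hg : ∀ y, HasDerivAt g (g' y) y := fun y => by
    have hsub := (hasDerivAt_id' y).sub_const a
    refine ((((hsub.const_mul (f' a)).const_add (f a)).add
      ((hsub.pow 2).const_mul (K / 2))).sub (hf y)).congr_deriv ?_
    simp only [g']
    ring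
  have hg' : ∀ y, HasDerivAt g' (K - f'' y) y := fun y =>
    ((((hasDerivAt_id' y).sub_const a).const_mul K).const_add (f' a)).sub (hf' y)
      |>.congr_deriv (by ring)
  have hconvex : ConvexOn ℝ univ g :=
    convexOn_of_hasDerivWithinAt2_nonneg convex_univ
      (fun y _ => (hg y).continuousAt.continuousWithinAt) (fun y _ => (hg y).hasDerivWithinAt)
      (fun y _ => (hg' y).hasDerivWithinAt) (fun y _ => sub_nonneg.2 (hK y))
  have hmin : IsMinOn g univ a := hconvex.isMinOn_of_rightDeriv_eq_zero (by simp) <| by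
    rw [(hg a).hasDerivWithinAt.derivWithin (uniqueDiffWithinAt_Ioi a)]
    simp [g']
  have := hmin (mem_univ θ)
  simp only [mem_ofPred_eq, g] at this
  linarith

theorem exp_neg_le_two_mul_sqrt_mul_integral {V V' V'' : ℝ → ℝ}
    (hV : ∀ y, HasDerivAt V (V' y) y) (hV' : ∀ y, HasDerivAt V' (V'' y) y) {K : ℝ}
    (hK0 : 0 < K) (hK : ∀ y, V'' y ≤ K) (hint : Integrable fun θ => exp (-V θ)) (θ₀ : ℝ) :
    exp (-V θ₀) ≤ 2 * √K * ∫ θ, exp (-V θ) := by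
  have hsK : 0 < √K := sqrt_pos.2 hK0
  set r := (√K)⁻¹
  have hr : 0 ≤ r := inv_nonneg.2 hsK.le
  have hnear : ∀ θ, V' θ₀ * (θ - θ₀) ≤ 0 → |θ - θ₀| ≤ r → V θ ≤ V θ₀ + 1 / 2 := by
    intro θ hslope hdist
    have hsq : K * (θ - θ₀) ^ 2 ≤ 1 := by
      calc K * (θ - θ₀) ^ 2 = K * |θ - θ₀| ^ 2 := by rw [sq_abs]
        _ ≤ K * r ^ 2 := by gcongr
        _ = 1 := by rw [inv_pow, sq_sqrt hK0.le, mul_inv_cancel₀ hK0.ne']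
    linarith [le_add_deriv_mul_add_sq_of_deriv2_le hV hV' hK θ₀ θ]
  -- go from `θ₀` in the direction in which the tangent line of `V` at `θ₀` descends
  obtain ⟨c, hc⟩ : ∃ c, ∀ θ ∈ Icc c (c + r), V θ ≤ V θ₀ + 1 / 2 := by
    rcases le_total 0 (V' θ₀) with h | h
    · refine ⟨θ₀ - r, fun θ hθ => hnear θ ?_ (abs_le.2 ⟨?_, ?_⟩)⟩
      · exact mul_nonpos_of_nonneg_of_nonpos h (by linarith [hθ.2])
      all_goals linarith [hθ.1, hθ.2]
    · refine ⟨θ₀, fun θ hθ => hnear θ ?_ (abs_le.2 ⟨?_, ?_⟩)⟩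
      · exact mul_nonpos_of_nonpos_of_nonneg h (by linarith [hθ.1])
      all_goals linarith [hθ.1, hθ.2]
  have hmass : r * exp (-V θ₀ - 1 / 2) ≤ ∫ θ, exp (-V θ) :=
    calc r * exp (-V θ₀ - 1 / 2) = ∫ _ in Icc c (c + r), exp (-V θ₀ - 1 / 2) := by
          simp [hr]
      _ ≤ ∫ θ in Icc c (c + r), exp (-V θ) :=
          setIntegral_mono_on (integrableOn_const measure_Icc_lt_top.ne) hint.integrableOn
            measurableSet_Icc fun θ hθ => exp_le_exp.2 (by linarith [hc θ hθ])
      _ ≤ ∫ θ, exp (-V θ) :=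
          setIntegral_le_integral hint (.of_forall fun θ => (exp_pos _).le)
  have hexp_half : exp (1 / 2) ≤ 2 := by
    have := exp_bound_div_one_sub_of_interval' (x := 1 / 2) (by norm_num) (by norm_num)
    norm_num at this ⊢
    exact this.le
  calc exp (-V θ₀) = exp (1 / 2) * √K * (r * exp (-V θ₀ - 1 / 2)) := by
        rw [mul_assoc, mul_inv_cancel_left₀ hsK.ne', ← exp_add]
        ring_nf
    _ ≤ 2 * √K * ∫ θ, exp (-V θ) := by gcongr

theorem mul_sq_le_variance_of_measure_lt_le {Ω : Type*} [MeasurableSpace Ω] {μ : Measure Ω}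
    [IsProbabilityMeasure μ] {X : Ω → ℝ} (hX : MemLp X 2 μ) {r p : ℝ} (hr : 0 < r) (hp0 : 0 ≤ p)
    (hp : μ {ω | |X ω - μ[X]| < r} ≤ ENNReal.ofReal p) :
    (1 - p) * r ^ 2 ≤ variance X μ := by
  have hfar : ENNReal.ofReal (1 - p) ≤ μ {ω | r ≤ |X ω - μ[X]|} := by
    have hcompl : {ω | r ≤ |X ω - μ[X]|} = {ω | |X ω - μ[X]| < r}ᶜ := by
      ext ω; simp
    rw [hcompl, prob_compl_eq_one_sub₀
      (nullMeasurableSet_lt (hX.1.aemeasurable.sub_const _).abs aemeasurable_const),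
      ENNReal.ofReal_sub _ hp0, ENNReal.ofReal_one]
    exact tsub_le_tsub_left hp 1
  rcases ENNReal.ofReal_le_ofReal_iff'.1 (hfar.trans (meas_ge_le_variance_div_sq hX hr)) with h | h
  · rwa [le_div_iff₀ (by positivity)] at h
  · nlinarith [variance_nonneg X μ]

theorem one_div_le_variance_normalize_withDensity_exp_neg {V V' V'' : ℝ → ℝ}
    (hV : ∀ y, HasDerivAt V (V' y) y) (hV' : ∀ y, HasDerivAt V' (V'' y) y) {K : ℝ}
    (hK0 : 0 < K) (hK : ∀ y, V'' y ≤ K) (hint : Integrable fun θ => exp (-V θ))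
    (hint_sq : Integrable fun θ => θ ^ 2 * exp (-V θ)) :
    1 / (128 * K) ≤ variance (fun θ => θ)
      (((volume.withDensity fun θ => ENNReal.ofReal (exp (-V θ))) univ)⁻¹ •
        volume.withDensity fun θ => ENNReal.ofReal (exp (-V θ))) := by
  set ν := volume.withDensity fun θ => ENNReal.ofReal (exp (-V θ))
  set Z := ∫ θ, exp (-V θ)
  have hsK : 0 < √K := sqrt_pos.2 hK0
  have hdens := exp_neg_le_two_mul_sqrt_mul_integral hV hV' hK0 hK hint
  have hZ : 0 < Z := pos_of_mul_pos_right ((exp_pos _).trans_le (hdens 0)) (by positivity)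
  have hνuniv : ν univ = ENNReal.ofReal Z := by
    rw [withDensity_apply _ MeasurableSet.univ, Measure.restrict_univ,
      ofReal_integral_eq_lintegral_ofReal hint (.of_forall fun θ => (exp_pos _).le)]
  have : IsFiniteMeasure ν := isFiniteMeasure_withDensity_ofReal hint.2
  have : NeZero ν := ⟨fun h => by simp [h] at hνuniv; linarith⟩
  have hVc : Continuous V := continuous_iff_continuousAt.2 fun y => (hV y).continuousAt
  have hmeas : Measurable fun θ => ENNReal.ofReal (exp (-V θ)) :=
    ENNReal.measurable_ofReal.comp hVc.neg.rexp.measurable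
  have hmem : MemLp (fun θ : ℝ => θ) 2 ((ν univ)⁻¹ • ν) := by
    refine (memLp_two_iff_integrable_sq measurable_id.aestronglyMeasurable).2
      (Integrable.smul_measure ?_ (ENNReal.inv_ne_top.2 (NeZero.ne _)))
    rw [integrable_withDensity_iff hmeas (.of_forall fun _ => ENNReal.ofReal_lt_top)]
    simpa [(exp_pos _).le] using hint_sq
  have hν_le : ν ≤ ENNReal.ofReal (2 * √K * Z) • volume := by
    rw [← withDensity_const]
    exact withDensity_mono (.of_forall fun θ => ENNReal.ofReal_le_ofReal (hdens θ))
  have hball : ∀ c, ((ν univ)⁻¹ • ν) (Metric.ball c (1 / (8 * √K))) ≤ ENNReal.ofReal (1 / 2) := by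
    intro c
    calc ((ν univ)⁻¹ • ν) (Metric.ball c (1 / (8 * √K)))
        ≤ (ENNReal.ofReal Z)⁻¹ *
            (ENNReal.ofReal (2 * √K * Z) * volume (Metric.ball c (1 / (8 * √K)))) := by
          rw [Measure.smul_apply, hνuniv, smul_eq_mul]
          gcongr
          exact hν_le _
      _ = ENNReal.ofReal (1 / 2) := by
          rw [Real.volume_ball, ← ENNReal.ofReal_inv_of_pos hZ,
            ← ENNReal.ofReal_mul (by positivity), ← ENNReal.ofReal_mul (by positivity)]
          congr 1
          field_simp
          ring
  have := mul_sq_le_variance_of_measure_lt_le (r := 1 / (8 * √K)) (p := 1 / 2) hmem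
    (by positivity) (by norm_num) (by simpa only [Metric.ball, dist_eq] using hball _)
  convert this using 1
  field_simp
  rw [sq_sqrt hK0.le]
  ring

/-- `exp (-posteriorPotential U x t)` is the unnormalized density of `π_{x,t}`. -/
noncomputable def posteriorPotential (U : ℝ → ℝ) (x t θ : ℝ) : ℝ := U θ + (t * θ ^ 2 / 2 - x * θ)

theorem exp_mul_sub_le {t : ℝ} (ht : 0 < t) (x θ : ℝ) :
    exp (x * θ - t * θ ^ 2 / 2) ≤ exp (x ^ 2 / (2 * t)) := by
  rw [exp_le_exp, le_div_iff₀ (by positivity)]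
  nlinarith [sq_nonneg (x - t * θ)]

theorem sq_mul_exp_mul_sub_le {t : ℝ} (ht : 0 < t) (x θ : ℝ) :
    θ ^ 2 * exp (x * θ - t * θ ^ 2 / 2) ≤ 4 / t * exp (x ^ 2 / t) := by
  have hsq : θ ^ 2 ≤ 4 / t * exp (t * θ ^ 2 / 4) := by
    rw [div_mul_eq_mul_div, le_div_iff₀ ht]
    linarith [add_one_le_exp (t * θ ^ 2 / 4)]
  have hexp : x * θ - t * θ ^ 2 / 2 ≤ x ^ 2 / t - t * θ ^ 2 / 4 := by
    rw [← sub_nonneg]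
    have : x ^ 2 / t - t * θ ^ 2 / 4 - (x * θ - t * θ ^ 2 / 2) = (x - t * θ / 2) ^ 2 / t := by
      field_simp; ring
    rw [this]; positivity
  calc θ ^ 2 * exp (x * θ - t * θ ^ 2 / 2)
      ≤ 4 / t * exp (t * θ ^ 2 / 4) * exp (x ^ 2 / t - t * θ ^ 2 / 4) := by gcongr
    _ = 4 / t * exp (x ^ 2 / t) := by rw [mul_assoc, ← exp_add]; ring_nf

theorem exp_neg_posteriorPotential (U : ℝ → ℝ) (x t θ : ℝ) :
    exp (-posteriorPotential U x t θ) = exp (x * θ - t * θ ^ 2 / 2) * exp (-U θ) := by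
  rw [← exp_add, posteriorPotential]; ring_nf

theorem withDensity_exp_neg_withDensity_eq_posteriorPotential {U : ℝ → ℝ} (hU : Measurable U)
    (x t : ℝ) :
    ((volume.withDensity fun θ => ENNReal.ofReal (exp (-U θ))).withDensity
        fun θ => ENNReal.ofReal (exp (x * θ - t * θ ^ 2 / 2))) =
      volume.withDensity fun θ => ENNReal.ofReal (exp (-posteriorPotential U x t θ)) := by
  rw [← withDensity_mul _ (by fun_prop) (by fun_prop)]
  congr with θ
  rw [Pi.mul_apply, ← ENNReal.ofReal_mul (exp_pos _).le, exp_neg_posteriorPotential, mul_comm]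

theorem integrable_exp_neg_posteriorPotential {U : ℝ → ℝ} (hU : Integrable fun θ => exp (-U θ))
    {t : ℝ} (ht : 0 < t) (x : ℝ) :
    Integrable fun θ => exp (-posteriorPotential U x t θ) := by
  simp_rw [exp_neg_posteriorPotential]
  refine hU.bdd_mul (c := exp (x ^ 2 / (2 * t))) (by fun_prop) (.of_forall fun θ => ?_)
  rw [norm_of_nonneg (exp_pos _).le]
  exact exp_mul_sub_le ht x θ

theorem integrable_sq_mul_exp_neg_posteriorPotential {U : ℝ → ℝ}
    (hU : Integrable fun θ => exp (-U θ)) {t : ℝ} (ht : 0 < t) (x : ℝ) :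
    Integrable fun θ => θ ^ 2 * exp (-posteriorPotential U x t θ) := by
  simp_rw [exp_neg_posteriorPotential, ← mul_assoc]
  refine hU.bdd_mul (c := 4 / t * exp (x ^ 2 / t)) (by fun_prop) (.of_forall fun θ => ?_)
  rw [norm_of_nonneg (by positivity)]
  exact sq_mul_exp_mul_sub_le ht x θ

end

/-- let `π_Θ(dθ) ∝ e^{-U(θ)} dθ` with `‖U''‖_∞ ≤ C`, and let
`π_{x,t}(dθ) ∝ e^{-U(θ) + xθ - tθ²/2} dθ` be the posterior of `Θ` given
`tΘ + √t G = x`.  Then for every `x`, `Var[Θ | tΘ + √t G = x] ≥ 1/(10⁵(C + t))`. -/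
theorem stmt11 (U : ℝ → ℝ) (hU : ContDiff ℝ 2 U) (C : ℝ) (hC0 : 0 ≤ C)
    (hC : ∀ x, |deriv (deriv U) x| ≤ C)
    (π : Measure ℝ)
    (hπdef : π = volume.withDensity fun θ => ENNReal.ofReal (Real.exp (-U θ)))
    [IsProbabilityMeasure π] (t : ℝ) (ht : 0 < t) :
    ∀ x : ℝ,
      1 / (10 ^ 5 * (C + t)) ≤
        ProbabilityTheory.variance (fun θ => θ)
          ((((π.withDensity fun θ =>
                ENNReal.ofReal (Real.exp (x * θ - t * θ ^ 2 / 2))) Set.univ)⁻¹) •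
            π.withDensity fun θ => ENNReal.ofReal (Real.exp (x * θ - t * θ ^ 2 / 2))) := by
  intro x
  obtain ⟨hU', -, hU''⟩ := contDiff_succ_iff_deriv (n := 1).1 hU
  have hexpU : Integrable fun θ => Real.exp (-U θ) := by
    refine ⟨hU'.continuous.neg.rexp.aestronglyMeasurable, ?_⟩
    rw [hasFiniteIntegral_iff_ofReal (.of_forall fun θ => (Real.exp_pos _).le),
      ← setLIntegral_univ, ← withDensity_apply _ .univ, ← hπdef]
    exact measure_lt_top π univ
  have hV : ∀ y, HasDerivAt (posteriorPotential U x t) (deriv U y + (t * y - x)) y := fun y =>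
    ((hU' y).hasDerivAt.add ((((hasDerivAt_id' y).pow 2).const_mul t).div_const 2 |>.sub
      ((hasDerivAt_id' y).const_mul x))).congr_deriv (by ring)
  have hV' : ∀ y, HasDerivAt (fun y => deriv U y + (t * y - x)) (deriv (deriv U) y + t) y :=
    fun y => ((hU''.differentiable one_ne_zero y).hasDerivAt.add
      (((hasDerivAt_id' y).const_mul t).sub_const x)).congr_deriv (by ring)
  have hV'' : ∀ y, deriv (deriv U) y + t ≤ C + t := fun y => by linarith [(abs_le.1 (hC y)).2]
  subst hπdef
  rw [withDensity_exp_neg_withDensity_eq_posteriorPotential hU'.continuous.measurable]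
  calc 1 / (10 ^ 5 * (C + t)) ≤ 1 / (128 * (C + t)) := by gcongr; norm_num
    _ ≤ _ := one_div_le_variance_normalize_withDensity_exp_neg hV hV' (by linarith) hV''
      (integrable_exp_neg_posteriorPotential hexpU ht x)
      (integrable_sq_mul_exp_neg_posteriorPotential hexpU ht x)
end
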